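/- Let A be an n×d matrix with thin SVD A = UΣVᵀ with Σ invertible diagonal ρ×ρ, and let S ∈ ℝ^{n×m}. Then P_{AᵀS} = V P_{ΣUᵀS} Vᵀ, and consequently (I - P_{AᵀS})Aᵀ = V(Σ - P_{ΣUᵀS}Σ)Uᵀ. -/

import Mathlib

open scoped RealInnerProductSpace
open Matrix MeasureTheory ProbabilityTheory

noncomputable section

abbrev EuclR (n : ℕ) := EuclideanSpace ℝ (Fin n)

def matVec {p q : ℕ} (M : Matrix (Fin p) (Fin q) ℝ) (x : EuclR q) : EuclR p :=
  Matrix.toEuclideanLin M x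

def matCLM {p q : ℕ} (M : Matrix (Fin p) (Fin q) ℝ) : EuclR q →L[ℝ] EuclR p :=
  LinearMap.toContinuousLinearMap (Matrix.toEuclideanLin M)

def ranM {p q : ℕ} (M : Matrix (Fin p) (Fin q) ℝ) : Submodule ℝ (EuclR p) :=
  LinearMap.range (Matrix.toEuclideanLin M)

def projOn {p : ℕ} (K : Submodule ℝ (EuclR p)) (x : EuclR p) : EuclR p :=
  (K.orthogonalProjection x : EuclR p)

def perpCLM {p : ℕ} (K : Submodule ℝ (EuclR p)) : EuclR p →L[ℝ] EuclR p :=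
  ContinuousLinearMap.id ℝ (EuclR p) - K.subtypeL.comp K.orthogonalProjection

def fconj {p : ℕ} (f : EuclR p → ℝ) (z : EuclR p) : EReal :=
  ⨆ w : EuclR p, ((⟪w, z⟫ - f w : ℝ) : EReal)

def fdom {p : ℕ} (f : EuclR p → ℝ) : Set (EuclR p) := {z | fconj f z ≠ ⊤}

def tcone {p : ℕ} (f : EuclR p → ℝ) (z : EuclR p) : Set (EuclR p) :=
  {Δ | ∃ t : ℝ, 0 ≤ t ∧ ∃ y ∈ fdom f, Δ = t • (y - z)}

def ZfVal {n d m : ℕ} (f : EuclR n → ℝ) (zs : EuclR n)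
    (A : Matrix (Fin n) (Fin d) ℝ) (S : Matrix (Fin d) (Fin m) ℝ) : ℝ :=
  sSup ((fun Δ => ‖matVec Aᵀ Δ - projOn (ranM S) (matVec Aᵀ Δ)‖) ''
    (tcone f zs ∩ Metric.closedBall 0 1))

/-! Because `Σ` is diagonal, `Aᵀ = V (Σ Uᵀ)`, so everything reduces to `P_{VB} = V P_B Vᵀ` for `V`
with orthonormal columns. The vector `V P_B Vᵀ w` lies in `range (V B)`, and `w - V P_B Vᵀ w` is
orthogonal to `range (V B)` because its image under `Vᵀ` is `Vᵀ w - P_B Vᵀ w ⊥ range B`; these two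
properties characterise the orthogonal projection. -/

lemma matVec_mul {p q s : ℕ} (M : Matrix (Fin p) (Fin q) ℝ) (N : Matrix (Fin q) (Fin s) ℝ)
    (x : EuclR s) : matVec (M * N) x = matVec M (matVec N x) := by
  simp [matVec]

lemma matVec_sub {p q : ℕ} (M : Matrix (Fin p) (Fin q) ℝ) (x y : EuclR q) :
    matVec M (x - y) = matVec M x - matVec M y :=
  map_sub _ _ _

lemma matVec_inner {p q : ℕ} (M : Matrix (Fin p) (Fin q) ℝ) (x : EuclR q) (y : EuclR p) :
    ⟪matVec M x, y⟫ = ⟪x, matVec Mᵀ y⟫ := by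
  rw [matVec, matVec, ← Matrix.conjTranspose_eq_transpose_of_trivial,
    Matrix.toEuclideanLin_conjTranspose_eq_adjoint]
  exact (LinearMap.adjoint_inner_right _ _ _).symm

lemma matVec_transpose_matVec_of_transpose_mul_self {p q : ℕ} {V : Matrix (Fin p) (Fin q) ℝ}
    (hV : Vᵀ * V = 1) (x : EuclR q) : matVec Vᵀ (matVec V x) = x := by
  rw [← matVec_mul, hV]
  simp [matVec]

lemma projOn_ranM_mul_of_transpose_mul_self {p q s : ℕ} {V : Matrix (Fin p) (Fin q) ℝ}
    (hV : Vᵀ * V = 1) (B : Matrix (Fin q) (Fin s) ℝ) (w : EuclR p) :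
    projOn (ranM (V * B)) w = matVec V (projOn (ranM B) (matVec Vᵀ w)) := by
  apply Submodule.eq_starProjection_of_mem_of_inner_eq_zero
  · obtain ⟨x, hx⟩ := (ranM B).starProjection_apply_mem (matVec Vᵀ w)
    exact ⟨x, (matVec_mul V B x).trans (congrArg (matVec V) hx)⟩
  · rintro _ ⟨x, rfl⟩
    change ⟪w - _, matVec (V * B) x⟫ = 0
    rw [matVec_mul, real_inner_comm, matVec_inner, matVec_sub,
      matVec_transpose_matVec_of_transpose_mul_self hV, real_inner_comm]
    exact Submodule.starProjection_inner_eq_zero _ _ ⟨x, rfl⟩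

theorem adaptive_projection_svd_general (n d r m : ℕ)
    (A : Matrix (Fin n) (Fin d) ℝ) (U : Matrix (Fin n) (Fin r) ℝ)
    (Sg : Matrix (Fin r) (Fin r) ℝ) (V : Matrix (Fin d) (Fin r) ℝ)
    (S : Matrix (Fin n) (Fin m) ℝ)
    (hA : A = U * Sg * Vᵀ) (hV : Vᵀ * V = 1)
    (hSg : Sg.IsDiag) :
    (∀ w : EuclR d,
      projOn (ranM (Aᵀ * S)) w = matVec V (projOn (ranM (Sg * Uᵀ * S)) (matVec Vᵀ w))) ∧
    (∀ z : EuclR n,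
      matVec Aᵀ z - projOn (ranM (Aᵀ * S)) (matVec Aᵀ z)
        = matVec V (matVec Sg (matVec Uᵀ z)
            - projOn (ranM (Sg * Uᵀ * S)) (matVec Sg (matVec Uᵀ z)))) := by
  have hAT : Aᵀ = V * (Sg * Uᵀ) := by
    rw [hA, Matrix.transpose_mul, Matrix.transpose_mul, Matrix.transpose_transpose,
      hSg.isSymm.eq]
  have hproj : ∀ w : EuclR d,
      projOn (ranM (Aᵀ * S)) w = matVec V (projOn (ranM (Sg * Uᵀ * S)) (matVec Vᵀ w)) := by
    intro w
    rw [hAT, Matrix.mul_assoc]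
    exact projOn_ranM_mul_of_transpose_mul_self hV _ w
  refine ⟨hproj, fun z => ?_⟩
  have hAz : matVec Aᵀ z = matVec V (matVec Sg (matVec Uᵀ z)) := by
    rw [hAT, matVec_mul, matVec_mul]
  rw [hproj, hAz, matVec_transpose_matVec_of_transpose_mul_self hV, ← matVec_sub]

/-- the projector onto the range of the adaptive sketch AᵀS in SVD coordinates. -/
theorem adaptive_projection_svd (n d r m : ℕ)
    (A : Matrix (Fin n) (Fin d) ℝ) (U : Matrix (Fin n) (Fin r) ℝ)
    (Sg : Matrix (Fin r) (Fin r) ℝ) (V : Matrix (Fin d) (Fin r) ℝ)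
    (S : Matrix (Fin n) (Fin m) ℝ)
    (hA : A = U * Sg * Vᵀ) (hU : Uᵀ * U = 1) (hV : Vᵀ * V = 1)
    (hSg : Sg.IsDiag) (hSginv : IsUnit Sg.det) :
    (∀ w : EuclR d,
      projOn (ranM (Aᵀ * S)) w = matVec V (projOn (ranM (Sg * Uᵀ * S)) (matVec Vᵀ w))) ∧
    (∀ z : EuclR n,
      matVec Aᵀ z - projOn (ranM (Aᵀ * S)) (matVec Aᵀ z)
        = matVec V (matVec Sg (matVec Uᵀ z)
            - projOn (ranM (Sg * Uᵀ * S)) (matVec Sg (matVec Uᵀ z)))) :=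
  adaptive_projection_svd_general n d r m A U Sg V S hA hV hSg
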